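/- Let (Ω, ν) be a measure space and let ω ↦ λ_ω be an integrable mapping from Ω to the set Z of null-sequences in l∞(ℤ^d), i.e., a measurable map into l∞(ℤ^d) with ∫_Ω ‖λ_ω‖ dν(ω) < ∞ such that each λ_ω is a null-sequence. Then the sequence λ(n) = ∫_Ω λ_ω(n) dν(ω), n ∈ ℤ^d, is a null-sequence. -/

import Mathlib

open Filter Topology

/-- A Følner sequence in `ℤ^d`. -/
def IsFolner (d : ℕ) (Φ : ℕ → Finset (Fin d → ℤ)) : Prop :=
  (∀ N, (Φ N).Nonempty) ∧
  ∀ v : Fin d → ℤ,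
    Tendsto (fun N => ((symmDiff ((Φ N).image (fun n => v + n)) (Φ N)).card : ℝ) / (Φ N).card)
      atTop (𝓝 0)

/-- A set `S ⊆ ℤ^d` has uniform (Banach) density zero. -/
def UnifDensityZero (d : ℕ) (S : Set (Fin d → ℤ)) : Prop :=
  ∀ Φ : ℕ → Finset (Fin d → ℤ), IsFolner d Φ →
    Tendsto (fun N => ((S ∩ (Φ N : Set (Fin d → ℤ))).ncard : ℝ) / (Φ N).card)
      atTop (𝓝 0)

/-- A bounded sequence `ℤ^d → ℂ` tending to zero in uniform density: a null-sequence. -/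
def IsNullSeq (d : ℕ) (lam : (Fin d → ℤ) → ℂ) : Prop :=
  (∃ C, ∀ n, ‖lam n‖ ≤ C) ∧
  ∀ ε > 0, UnifDensityZero d {n | ε ≤ ‖lam n‖}

/-!
A bounded sequence `λ` is a null-sequence iff its mean modulus `𝔼 n ∈ Φ N, ‖λ n‖` tends to `0`
along every Følner sequence: a bound `C` gives `𝔼 ‖λ‖ ≤ C · density {‖λ‖ ≥ δ} + δ`, and Markov's
inequality gives `ε · density {‖λ‖ ≥ ε} ≤ 𝔼 ‖λ‖`. The second condition passes to integrals, as
`𝔼 n ∈ Φ N, ‖∫ λ_ω(n)‖ ≤ ∫ 𝔼 n ∈ Φ N, ‖λ_ω(n)‖ dν(ω)`, and the right-hand side tends to `0` by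
dominated convergence with dominating function `ω ↦ ‖λ_ω‖`.
-/

open MeasureTheory Finset
open scoped BigOperators

namespace Finset

variable {α : Type*} {s : Finset α} {f : α → ℝ}

lemma ncard_inter_coe_eq_card_filter (S : Set α) (s : Finset α) [DecidablePred (· ∈ S)] :
    (S ∩ ↑s).ncard = #{x ∈ s | x ∈ S} := by
  rw [← Set.ncard_coe_finset, coe_filter, Set.inter_comm]
  rfl

lemma mul_card_filter_le_sum (hf : ∀ i ∈ s, 0 ≤ f i) (ε : ℝ) :
    ε * #{i ∈ s | ε ≤ f i} ≤ ∑ i ∈ s, f i :=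
  calc ε * #{i ∈ s | ε ≤ f i} = ∑ _i ∈ s with ε ≤ f _i, ε := by
        rw [sum_const, nsmul_eq_mul, mul_comm]
    _ ≤ ∑ i ∈ s with ε ≤ f i, f i := sum_le_sum fun i hi => (mem_filter.1 hi).2
    _ ≤ ∑ i ∈ s, f i := sum_le_sum_of_subset_of_nonneg (filter_subset _ _) fun i hi _ => hf i hi

lemma sum_le_mul_card_filter_add {C δ : ℝ} (hC : ∀ i ∈ s, f i ≤ C) (hδ : 0 ≤ δ) :
    ∑ i ∈ s, f i ≤ C * #{i ∈ s | δ ≤ f i} + δ * #s := by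
  rw [← sum_filter_add_sum_filter_not s (δ ≤ f ·)]
  gcongr
  · calc ∑ i ∈ s with δ ≤ f i, f i ≤ ∑ _i ∈ s with δ ≤ f _i, C :=
          sum_le_sum fun i hi => hC i (mem_filter.1 hi).1
      _ = C * #{i ∈ s | δ ≤ f i} := by rw [sum_const, nsmul_eq_mul, mul_comm]
  · calc ∑ i ∈ s with ¬δ ≤ f i, f i ≤ ∑ _i ∈ s with ¬δ ≤ f _i, δ :=
          sum_le_sum fun i hi => (not_le.1 (mem_filter.1 hi).2).le
      _ = δ * #{i ∈ s | ¬δ ≤ f i} := by rw [sum_const, nsmul_eq_mul, mul_comm]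
      _ ≤ δ * #s := by gcongr; exact filter_subset _ _

lemma mul_ncard_div_card_le_expect (hf : ∀ i ∈ s, 0 ≤ f i) (ε : ℝ) :
    ε * (({i | ε ≤ f i} ∩ ↑s).ncard / #s) ≤ 𝔼 i ∈ s, f i := by
  classical
  rw [ncard_inter_coe_eq_card_filter, expect_eq_sum_div_card, ← mul_div_assoc]
  exact div_le_div_of_nonneg_right (mul_card_filter_le_sum hf ε) (Nat.cast_nonneg _)

lemma expect_le_mul_ncard_div_card_add {C δ : ℝ} (hC : ∀ i ∈ s, f i ≤ C) (hδ : 0 ≤ δ) :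
    𝔼 i ∈ s, f i ≤ C * (({i | δ ≤ f i} ∩ ↑s).ncard / #s) + δ := by
  classical
  rw [ncard_inter_coe_eq_card_filter, expect_eq_sum_div_card, mul_div_assoc']
  calc (∑ i ∈ s, f i) / #s ≤ (C * #{i ∈ s | δ ≤ f i} + δ * #s) / #s :=
        div_le_div_of_nonneg_right (sum_le_mul_card_filter_add hC hδ) (Nat.cast_nonneg _)
    _ = C * #{i ∈ s | δ ≤ f i} / #s + δ * (#s / #s) := by
        rw [add_div, mul_div_assoc, mul_div_assoc]
    _ ≤ C * #{i ∈ s | δ ≤ f i} / #s + δ := by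
        gcongr; exact mul_le_of_le_one_right hδ (div_self_le_one _)

end Finset

section NullSeq

variable {d : ℕ} {lam : (Fin d → ℤ) → ℂ}

lemma IsNullSeq.bddAbove_range_norm (h : IsNullSeq d lam) : BddAbove (Set.range fun n => ‖lam n‖) :=
  let ⟨C, hC⟩ := h.1
  ⟨C, Set.forall_mem_range.2 hC⟩

theorem IsNullSeq.tendsto_expect_norm (h : IsNullSeq d lam) {Φ : ℕ → Finset (Fin d → ℤ)}
    (hΦ : IsFolner d Φ) : Tendsto (fun N => 𝔼 n ∈ Φ N, ‖lam n‖) atTop (𝓝 0) := by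
  obtain ⟨⟨C, hC⟩, hdens⟩ := h
  refine tendsto_order.2 ⟨fun a ha => Eventually.of_forall fun N =>
    ha.trans_le (expect_nonneg fun _ _ => norm_nonneg _), fun ε hε => ?_⟩
  have hδ : 0 < ε / 2 := half_pos hε
  have hbound := ((hdens _ hδ Φ hΦ).const_mul C).add_const (ε / 2)
  rw [mul_zero, zero_add] at hbound
  filter_upwards [hbound.eventually_lt_const (half_lt_self hε)] with N hN
  exact (expect_le_mul_ncard_div_card_add (fun n _ => hC n) hδ.le).trans_lt hN

theorem isNullSeq_of_tendsto_expect_norm (hbdd : ∃ C, ∀ n, ‖lam n‖ ≤ C)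
    (h : ∀ Φ, IsFolner d Φ → Tendsto (fun N => 𝔼 n ∈ Φ N, ‖lam n‖) atTop (𝓝 0)) :
    IsNullSeq d lam := by
  refine ⟨hbdd, fun ε hε Φ hΦ => ?_⟩
  have hlim := (h Φ hΦ).const_mul ε⁻¹
  rw [mul_zero] at hlim
  refine squeeze_zero (fun N => by positivity) (fun N => ?_) hlim
  rw [le_inv_mul_iff₀ hε]
  exact mul_ncard_div_card_le_expect (fun _ _ => norm_nonneg _) ε

end NullSeq

lemma expect_norm_integral_le_integral_expect_norm {Ω ι E : Type*} [MeasurableSpace Ω]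
    {ν : Measure Ω} [NormedAddCommGroup E] [NormedSpace ℝ E] (s : Finset ι) {f : Ω → ι → E}
    (hf : ∀ i ∈ s, Integrable (fun ω => f ω i) ν) :
    𝔼 i ∈ s, ‖∫ ω, f ω i ∂ν‖ ≤ ∫ ω, 𝔼 i ∈ s, ‖f ω i‖ ∂ν := by
  simp_rw [expect_eq_sum_div_card]
  rw [integral_div, integral_finsetSum s fun i hi => (hf i hi).norm]
  gcongr
  exact norm_integral_le_integral_norm _

open MeasureTheory in
/-- Let `(Ω, ν)` be a measure space and `ω ↦ λ_ω` an integrable mapping from `Ω` to the set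
of null-sequences in `l∞(ℤ^d)` (measurable, with `∫ ‖λ_ω‖ dν < ∞`, each `λ_ω` a
null-sequence). Then the sequence `λ(n) = ∫_Ω λ_ω(n) dν(ω)` is a null-sequence. -/
theorem integral_of_nullsequences_is_nullseq
    (d : ℕ) {Ω : Type*} [MeasurableSpace Ω] (ν : Measure Ω)
    (Λ : Ω → (Fin d → ℤ) → ℂ)
    (hmeas : ∀ n : Fin d → ℤ, Measurable fun ω => Λ ω n)
    (hnull : ∀ ω, IsNullSeq d (Λ ω))
    (hint : Integrable (fun ω => ⨆ n : Fin d → ℤ, ‖Λ ω n‖) ν) :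
    IsNullSeq d fun n => ∫ ω, Λ ω n ∂ν := by
  set F : Ω → ℝ := fun ω => ⨆ n, ‖Λ ω n‖
  have hΛF : ∀ ω n, ‖Λ ω n‖ ≤ F ω := fun ω n => le_ciSup (hnull ω).bddAbove_range_norm n
  have hΛint : ∀ n, Integrable (fun ω => Λ ω n) ν := fun n =>
    hint.mono' (hmeas n).aestronglyMeasurable (ae_of_all _ (hΛF · n))
  refine isNullSeq_of_tendsto_expect_norm
    ⟨∫ ω, F ω ∂ν, fun n => norm_integral_le_of_norm_le hint (ae_of_all _ (hΛF · n))⟩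
    fun Φ hΦ => ?_
  have hdom : Tendsto (fun N => ∫ ω, 𝔼 n ∈ Φ N, ‖Λ ω n‖ ∂ν) atTop (𝓝 0) := by
    have hmeasN : ∀ N, AEStronglyMeasurable (fun ω => 𝔼 n ∈ Φ N, ‖Λ ω n‖) ν := fun N => by
      simp_rw [expect_eq_sum_div_card]
      exact ((Finset.measurable_sum _ fun n _ => (hmeas n).norm).div_const _).aestronglyMeasurable
    have hbound : ∀ N ω, ‖𝔼 n ∈ Φ N, ‖Λ ω n‖‖ ≤ F ω := fun N ω => by
      rw [Real.norm_of_nonneg (expect_nonneg fun _ _ => norm_nonneg _)]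
      exact expect_le (hΦ.1 N) fun n _ => hΛF ω n
    simpa using tendsto_integral_of_dominated_convergence F hmeasN hint
      (fun N => ae_of_all _ (hbound N)) (ae_of_all _ fun ω => (hnull ω).tendsto_expect_norm hΦ)
  exact squeeze_zero (fun N => expect_nonneg fun _ _ => norm_nonneg _)
    (fun N => expect_norm_integral_le_integral_expect_norm _ fun n _ => hΛint n) hdom
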